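/- arXiv:1506.09139 — 13 statements merged into one kernel-verified Lean document; each statement's English description precedes it below -/
import Mathlib

section
/- For all real numbers a, b, a', b' with (a', b') ≠ (0, 0), there exists a real number x ≠ 0 such that 1 + x·(a' − b) + x²·(b'·a − b·a') − (1/3)·b'·x³ = 0. -/
lemma cubic_root (p q r : ℝ) : ∃ x : ℝ, x ^ 3 + p * x ^ 2 + q * x + r = 0 := by
  set f : ℝ → ℝ := fun x => x ^ 3 + p * x ^ 2 + q * x + r with hf
  set M : ℝ := 1 + |p| + |q| + |r| with hM
  have hp := abs_nonneg p
  have hq := abs_nonneg q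
  have hr := abs_nonneg r
  have hM1 : (1 : ℝ) ≤ M := by simp [hM]; linarith
  have hap : p ≤ |p| := le_abs_self p
  have hap' : -|p| ≤ p := neg_abs_le p
  have haq : q ≤ |q| := le_abs_self q
  have haq' : -|q| ≤ q := neg_abs_le q
  have har : r ≤ |r| := le_abs_self r
  have har' : -|r| ≤ r := neg_abs_le r
  have h5 : M ^ 2 * (M - (|p| + |q| + |r|)) = M ^ 2 := by rw [hM]; ring
  have h1 : 0 ≤ (p + |p|) * M ^ 2 := mul_nonneg (by linarith) (sq_nonneg M)
  have h1' : 0 ≤ (|p| - p) * M ^ 2 := mul_nonneg (by linarith) (sq_nonneg M)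
  have h2 : 0 ≤ (q + |q|) * M := mul_nonneg (by linarith) (by linarith)
  have h2' : 0 ≤ (|q| - q) * M := mul_nonneg (by linarith) (by linarith)
  have h3 : 0 ≤ |q| * (M ^ 2 - M) := mul_nonneg hq (by nlinarith)
  have h4 : 0 ≤ |r| * (M ^ 2 - 1) := mul_nonneg hr (by nlinarith)
  have hfM : 0 ≤ f M := by
    simp only [hf]
    nlinarith [sq_nonneg M]
  have hfmM : f (-M) ≤ 0 := by
    simp only [hf]
    nlinarith [sq_nonneg M]
  have hcont : ContinuousOn f (Set.Icc (-M) M) := by fun_prop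
  have hle : -M ≤ M := by linarith
  have := intermediate_value_Icc hle hcont
  have h0 : (0 : ℝ) ∈ Set.Icc (f (-M)) (f M) := ⟨hfmM, hfM⟩
  obtain ⟨x, _, hx⟩ := this h0
  exact ⟨x, hx⟩

theorem stmt_0 (a b a' b' : ℝ) (h : (a', b') ≠ (0, 0)) :
    ∃ x : ℝ, x ≠ 0 ∧
      1 + x * (a' - b) + x ^ 2 * (b' * a - b * a') - (1 / 3) * b' * x ^ 3 = 0 := by
  by_cases hb' : b' = 0
  · have ha' : a' ≠ 0 := by
      intro ha'
      exact h (by simp [ha', hb'])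
    refine ⟨-1 / a', by simp [ha'], ?_⟩
    subst hb'
    field_simp
    ring
  · obtain ⟨x, hx⟩ := cubic_root (-3 * (b' * a - b * a') / b') (-3 * (a' - b) / b') (-3 / b')
    have hxne : x ≠ 0 := by
      intro h0
      rw [h0] at hx
      simp at hx
      exact hb' hx
    refine ⟨x, hxne, ?_⟩
    calc 1 + x * (a' - b) + x ^ 2 * (b' * a - b * a') - (1 / 3) * b' * x ^ 3
        = -(b' / 3) * (x ^ 3 + (-3 * (b' * a - b * a') / b') * x ^ 2
            + (-3 * (a' - b) / b') * x + (-3 / b')) := by field_simp; ring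
      _ = -(b' / 3) * 0 := by rw [hx]
      _ = 0 := by ring
end

section
/- For all real numbers a₁, a₃, b₃ there exists a real number p with cos p ≠ 1 (i.e. p is not an integer multiple of 2π) such that (cos p − 1)·(2a₁ − a₃p + b₃·p·a₁) + (2 + b₃p)·sin p = 0. -/
/-!
The denominator `ñ` vanishes at every multiple of `2π`, where its derivative is `2 + b₃ p`.
For `b₃ ≥ 0` this derivative is positive at both `0` and `2π`, so `ñ` is positive just right of
`0` and negative just left of `2π`, and the intermediate value theorem gives a zero strictly in
between. The case `b₃ < 0` reduces to this one through `ñ_{a₁,a₃,b₃}(-p) = -ñ_{-a₁,a₃,-b₃}(p)`.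
-/

open Real Set Filter Topology

section ZeroBetweenZeros

variable {f : ℝ → ℝ} {f' x : ℝ}

lemma HasDerivAt.eventually_pos_nhdsGT (hf : HasDerivAt f f' x) (hf' : 0 < f') (hx : f x = 0) :
    ∀ᶠ y in 𝓝[>] x, 0 < f y := by
  have hslope := (hasDerivAt_iff_tendsto_slope.mp hf).mono_left (nhdsGT_le_nhdsNE x)
  filter_upwards [hslope.eventually (eventually_gt_nhds hf'), self_mem_nhdsWithin]
    with y hy hxy
  exact pos_of_slope_pos hxy hy hx

lemma HasDerivAt.eventually_neg_nhdsLT (hf : HasDerivAt f f' x) (hf' : 0 < f') (hx : f x = 0) :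
    ∀ᶠ y in 𝓝[<] x, f y < 0 := by
  have hslope := (hasDerivAt_iff_tendsto_slope.mp hf).mono_left (nhdsLT_le_nhdsNE x)
  filter_upwards [hslope.eventually (eventually_gt_nhds hf'), self_mem_nhdsWithin]
    with y hy hyx
  exact neg_of_slope_pos hyx hy hx

lemma exists_mem_Ioo_eq_zero_of_hasDerivAt_pos {a b fa fb : ℝ} (hab : a < b)
    (hf : ContinuousOn f (Icc a b)) (ha : f a = 0) (hb : f b = 0)
    (hfa : HasDerivAt f fa a) (hfb : HasDerivAt f fb b) (hfa' : 0 < fa) (hfb' : 0 < fb) :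
    ∃ c ∈ Ioo a b, f c = 0 := by
  obtain ⟨y, hfy, hy⟩ := ((hfb.eventually_neg_nhdsLT hfb' hb).and
    (Ioo_mem_nhdsLT hab)).exists
  obtain ⟨x, hfx, hx⟩ := ((hfa.eventually_pos_nhdsGT hfa' ha).and
    (Ioo_mem_nhdsGT hy.1)).exists
  obtain ⟨c, hc, hfc⟩ := intermediate_value_Ioo' hx.2.le
    (hf.mono (Icc_subset_Icc hx.1.le hy.2.le)) ⟨hfy, hfx⟩
  exact ⟨c, ⟨hx.1.trans hc.1, hc.2.trans hy.2⟩, hfc⟩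

end ZeroBetweenZeros

/-- The denominator `ñ` of the unique-decomposition formulas, as a function of `p`. -/
noncomputable def decompDenom (a₁ a₃ b₃ p : ℝ) : ℝ :=
  (cos p - 1) * (2 * a₁ - a₃ * p + b₃ * p * a₁) + (2 + b₃ * p) * sin p

namespace decompDenom

variable {a₁ a₃ b₃ p : ℝ}

lemma apply_neg : decompDenom a₁ a₃ b₃ (-p) = -decompDenom (-a₁) a₃ (-b₃) p := by
  simp only [decompDenom, cos_neg, sin_neg]
  ring

lemma eq_zero_of_cos_eq_one (hp : cos p = 1) : decompDenom a₁ a₃ b₃ p = 0 := by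
  simp [decompDenom, hp, sin_eq_zero_iff_cos_eq.mpr (Or.inl hp)]

lemma continuous : Continuous (decompDenom a₁ a₃ b₃) := by
  unfold decompDenom
  fun_prop

lemma hasDerivAt_of_cos_eq_one (hp : cos p = 1) :
    HasDerivAt (decompDenom a₁ a₃ b₃) (2 + b₃ * p) p := by
  have hsin : sin p = 0 := sin_eq_zero_iff_cos_eq.mpr (Or.inl hp)
  have hlin : HasDerivAt (fun q => 2 * a₁ - a₃ * q + b₃ * q * a₁) (-a₃ + b₃ * a₁) p :=
    ((((hasDerivAt_id p).const_mul a₃).const_sub (2 * a₁)).add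
      (((hasDerivAt_id p).const_mul b₃).mul_const a₁)).congr_deriv (by ring)
  have hfac : HasDerivAt (fun q => 2 + b₃ * q) b₃ p := by
    simpa using ((hasDerivAt_id p).const_mul b₃).const_add 2
  exact ((((hasDerivAt_cos p).sub_const 1).mul hlin).add
    (hfac.mul (hasDerivAt_sin p))).congr_deriv (by rw [hp, hsin]; ring)

lemma exists_mem_Ioo_eq_zero (hb₃ : 0 ≤ b₃) :
    ∃ p ∈ Ioo 0 (2 * π), decompDenom a₁ a₃ b₃ p = 0 := by
  exact exists_mem_Ioo_eq_zero_of_hasDerivAt_pos (by positivity) continuous.continuousOn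
    (eq_zero_of_cos_eq_one cos_zero) (eq_zero_of_cos_eq_one cos_two_pi)
    (hasDerivAt_of_cos_eq_one cos_zero) (hasDerivAt_of_cos_eq_one cos_two_pi)
    (by norm_num) (by positivity)

end decompDenom

theorem stmt_2 (a₁ a₃ b₃ : ℝ) :
    ∃ p : ℝ, Real.cos p ≠ 1 ∧
      (Real.cos p - 1) * (2 * a₁ - a₃ * p + b₃ * p * a₁) + (2 + b₃ * p) * Real.sin p = 0 := by
  obtain ⟨p, hp, hp0, hzero⟩ : ∃ p ∈ Ioo (-(2 * π)) (2 * π), p ≠ 0 ∧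
      decompDenom a₁ a₃ b₃ p = 0 := by
    rcases le_or_gt 0 b₃ with hb₃ | hb₃
    · obtain ⟨p, hp, hzero⟩ := decompDenom.exists_mem_Ioo_eq_zero (a₁ := a₁) (a₃ := a₃) hb₃
      exact ⟨p, ⟨by linarith [hp.1, pi_pos], hp.2⟩, hp.1.ne', hzero⟩
    · obtain ⟨p, hp, hzero⟩ :=
        decompDenom.exists_mem_Ioo_eq_zero (a₁ := -a₁) (a₃ := a₃) (neg_nonneg.mpr hb₃.le)
      refine ⟨-p, ⟨by linarith [hp.2], by linarith [hp.1, pi_pos]⟩, neg_ne_zero.mpr hp.1.ne', ?_⟩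
      rw [decompDenom.apply_neg, hzero, neg_zero]
  exact ⟨p, fun hcos => hp0 ((cos_eq_one_iff_of_lt_of_lt hp.1 hp.2).mp hcos), hzero⟩
end

section
/- Let a₁, a₃, b₃ be real numbers and define n(x) = (1 − eˣ)·(2a₁ − a₃x + b₃·a₁·x) + (eˣ + 1)·(2 + b₃x). If one of the following holds: (a) b₃ = 0, a₃ = 0 and a₁ ∉ [−1, 1]; (b) b₃ = 0 and a₃ < 0; (c) b₃ ≠ 0 and a₃ ≤ 0; (d) b₃ < 0, a₃ > 0 and a₁ < a₃/b₃ + 1; (e) b₃ > 0, a₃ > 0 and a₁ > a₃/b₃ − 1; then there exists p ∈ ℝ with p ≠ 0 and n(p) = 0. -/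
/-!
Writing `n x = exp x * (A + B x) + (C + D x)` with `A = 2 - 2a₁`, `B = a₃ + b₃ - b₃a₁`,
`C = 2 + 2a₁`, `D = b₃ + b₃a₁ - a₃`, the function is positive at `0`, so by the intermediate
value theorem it suffices to find a point where `n ≤ 0`. In cases (a), (b), (d), (e) the sign of
`n` at `+∞` or `-∞` is negative: at `+∞` the term `exp x * (A + B x)` dominates, at `-∞` the affine
part `C + D x` does. In case (c) the point `x = -2 / b₃` kills the second summand of `n`, and
there `n = a₃ t (1 - exp (-t))` with `t = 2 / b₃`, which is `≤ 0` because `a₃ ≤ 0`.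
-/

open Real Filter Topology

theorem exists_ne_and_eq_zero_of_pos_of_nonpos {f : ℝ → ℝ} (hf : Continuous f) {a b : ℝ}
    (ha : 0 < f a) (hb : f b ≤ 0) : ∃ p, p ≠ a ∧ f p = 0 := by
  obtain ⟨p, -, hp⟩ := intermediate_value_uIcc hf.continuousOn (Set.mem_uIcc.2 (Or.inr ⟨hb, ha.le⟩))
  exact ⟨p, by rintro rfl; exact ha.ne' hp, hp⟩

theorem mul_one_sub_exp_neg_nonneg (t : ℝ) : 0 ≤ t * (1 - exp (-t)) := by
  rcases le_total 0 t with ht | ht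
  · exact mul_nonneg ht (sub_nonneg.2 (exp_le_one_iff.2 (neg_nonpos.2 ht)))
  · exact mul_nonneg_of_nonpos_of_nonpos ht (sub_nonpos.2 (one_le_exp (neg_nonneg.2 ht)))

noncomputable def expAffine (A B C D x : ℝ) : ℝ := exp x * (A + B * x) + (C + D * x)

namespace expAffine

variable {A B C D : ℝ}

theorem continuous (A B C D : ℝ) : Continuous (expAffine A B C D) := by
  unfold expAffine; fun_prop

theorem eq_exp_mul (A B C D x : ℝ) :
    expAffine A B C D x = exp x * (A + B * x + (C + D * x) * exp (-x)) := by
  rw [expAffine, exp_neg]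
  field_simp

theorem neg_eq_exp_neg_mul (A B C D x : ℝ) :
    expAffine C (-D) A (-B) (-x) = exp (-x) * expAffine A B C D x := by
  rw [expAffine, expAffine, exp_neg]
  field_simp
  ring

theorem tendsto_affine_mul_exp_neg_atTop (C D : ℝ) :
    Tendsto (fun x => (C + D * x) * exp (-x)) atTop (𝓝 0) := by
  have h := (tendsto_exp_neg_atTop_nhds_zero.const_mul C).add
    ((tendsto_pow_mul_exp_neg_atTop_nhds_zero 1).const_mul D)
  simpa only [pow_one, mul_zero, add_zero, add_mul, mul_assoc] using h

theorem eventually_neg_atTop (h : B < 0 ∨ B = 0 ∧ A < 0) :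
    ∀ᶠ x in atTop, expAffine A B C D x < 0 := by
  have hg : ∀ᶠ x in atTop, A + B * x + (C + D * x) * exp (-x) < 0 := by
    rcases h with hB | ⟨rfl, hA⟩
    · have hlin : Tendsto (fun x => A + B * x) atTop atBot :=
        tendsto_atBot_add_const_left _ A (tendsto_id.const_mul_atTop_of_neg hB)
      exact (hlin.atBot_add (tendsto_affine_mul_exp_neg_atTop C D)).eventually_lt_atBot 0
    · have hlim := (tendsto_const_nhds (x := A)).add (tendsto_affine_mul_exp_neg_atTop C D)
      rw [add_zero] at hlim
      simpa only [zero_mul, add_zero] using hlim.eventually_lt_const hA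
  filter_upwards [hg] with x hx
  rw [eq_exp_mul]
  exact mul_neg_of_pos_of_neg (exp_pos x) hx

theorem eventually_neg_atBot (h : 0 < D ∨ D = 0 ∧ C < 0) :
    ∀ᶠ x in atBot, expAffine A B C D x < 0 := by
  have h' : -D < 0 ∨ -D = 0 ∧ C < 0 :=
    h.imp neg_neg_of_pos fun ⟨hD, hC⟩ => ⟨neg_eq_zero.2 hD, hC⟩
  filter_upwards [tendsto_neg_atBot_atTop.eventually (eventually_neg_atTop (A := C) (D := -B) h')]
    with x hx
  rw [neg_eq_exp_neg_mul] at hx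
  exact neg_of_mul_neg_right hx (exp_pos _).le

theorem exists_nonpos (h : (B < 0 ∨ B = 0 ∧ A < 0) ∨ (0 < D ∨ D = 0 ∧ C < 0)) :
    ∃ x, expAffine A B C D x ≤ 0 := by
  rcases h with h | h
  · exact (eventually_neg_atTop h).exists.imp fun _ => le_of_lt
  · exact (eventually_neg_atBot h).exists.imp fun _ => le_of_lt

end expAffine

theorem stmt_3 (a₁ a₃ b₃ : ℝ)
    (n : ℝ → ℝ)
    (hn : ∀ x, n x = (1 - Real.exp x) * (2 * a₁ - a₃ * x + b₃ * a₁ * x) +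
      (Real.exp x + 1) * (2 + b₃ * x))
    (h : (b₃ = 0 ∧ a₃ = 0 ∧ a₁ ∉ Set.Icc (-1 : ℝ) 1) ∨
         (b₃ = 0 ∧ a₃ < 0) ∨
         (b₃ ≠ 0 ∧ a₃ ≤ 0) ∨
         (b₃ < 0 ∧ a₃ > 0 ∧ a₁ < a₃ / b₃ + 1) ∨
         (b₃ > 0 ∧ a₃ > 0 ∧ a₁ > a₃ / b₃ - 1)) :
    ∃ p : ℝ, p ≠ 0 ∧ n p = 0 := by
  have hform : n = expAffine (2 - 2 * a₁) (a₃ + b₃ - b₃ * a₁) (2 + 2 * a₁) (b₃ + b₃ * a₁ - a₃) := by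
    funext x; rw [hn, expAffine]; ring
  suffices ∃ q, n q ≤ 0 by
    obtain ⟨q, hq⟩ := this
    exact exists_ne_and_eq_zero_of_pos_of_nonpos (hform ▸ expAffine.continuous ..)
      (by rw [hn]; norm_num) hq
  rcases h with ⟨rfl, rfl, ha₁⟩ | ⟨rfl, ha₃⟩ | ⟨hb₃, ha₃⟩ | ⟨hb₃, -, ha₁⟩ | ⟨hb₃, -, ha₁⟩
  · rw [hform]
    rcases not_and_or.1 ha₁ with h | h
    · exact expAffine.exists_nonpos (.inr (.inr ⟨by ring, by linarith⟩))
    · exact expAffine.exists_nonpos (.inl (.inr ⟨by ring, by linarith⟩))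
  · rw [hform]
    exact expAffine.exists_nonpos (.inl (.inl (by linarith)))
  · have hbt : b₃ * (2 / b₃) = 2 := mul_div_cancel₀ 2 hb₃
    refine ⟨-(2 / b₃), ?_⟩
    have hval : n (-(2 / b₃)) = a₃ * (2 / b₃ * (1 - exp (-(2 / b₃)))) := by
      rw [hn]; linear_combination (-((1 - exp (-(2 / b₃))) * a₁ + exp (-(2 / b₃)) + 1)) * hbt
    rw [hval]
    exact mul_nonpos_of_nonpos_of_nonneg ha₃ (mul_one_sub_exp_neg_nonneg _)
  · have := (lt_div_iff_of_neg hb₃).1 (sub_lt_iff_lt_add.2 ha₁)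
    rw [hform]
    exact expAffine.exists_nonpos (.inl (.inl (by linarith)))
  · have := (div_lt_iff₀ hb₃).1 (sub_lt_iff_lt_add.1 ha₁)
    rw [hform]
    exact expAffine.exists_nonpos (.inr (.inl (by linarith)))
end

section
/- Let a₃ > 0, let p ∈ ℝ with p ≠ 0, and set a₁ = (1/2)·(p·a₃ + 2 + a₃ − a₃·e^{−p}). Define n(x) = eˣ·(a₃x − 2a₁ + 2) − a₃x + 2a₁ + 2. Then n(p) > 0 if and only if a₃ < 4eᵖ/(eᵖ − 1)². -/
theorem stmt_5 (a₃ p : ℝ) (ha₃ : a₃ > 0) (hp : p ≠ 0)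
    (a₁ : ℝ) (ha₁ : a₁ = (1 / 2) * (p * a₃ + 2 + a₃ - a₃ * Real.exp (-p)))
    (n : ℝ → ℝ)
    (hn : ∀ x, n x = Real.exp x * (a₃ * x - 2 * a₁ + 2) - a₃ * x + 2 * a₁ + 2) :
    n p > 0 ↔ a₃ < 4 * Real.exp p / (Real.exp p - 1) ^ 2 := by
  have hE : Real.exp p > 0 := Real.exp_pos p
  have hE1 : Real.exp p ≠ 1 := fun h => hp (by simpa using h)
  have hsq : (0:ℝ) < (Real.exp p - 1) ^ 2 := by
    have h0 : Real.exp p - 1 ≠ 0 := sub_ne_zero.mpr hE1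
    positivity
  have hinv : Real.exp (-p) = (Real.exp p)⁻¹ := Real.exp_neg p
  have hmul : Real.exp p * (Real.exp p)⁻¹ = 1 := mul_inv_cancel₀ (ne_of_gt hE)
  have hnp : n p = a₃ * (2 - Real.exp p - (Real.exp p)⁻¹) + 4 := by
    rw [hn p, ha₁, hinv]; field_simp; ring
  rw [lt_div_iff₀ hsq, gt_iff_lt, hnp]
  constructor <;> intro h <;> nlinarith [hE, hmul, sq_nonneg (Real.exp p - 1)]
end

section
/- For every real number p < 0 one has eᵖ·(1 + p) − 1 < 0 and (e^{2p} + 2p·eᵖ − 1)/(eᵖ − 1)² < (1 + eᵖ·(1 + p))/(eᵖ·(1 + p) − 1). -/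
theorem stmt_6 (p : ℝ) (hp : p < 0) :
    Real.exp p * (1 + p) - 1 < 0 ∧
    (Real.exp (2 * p) + 2 * p * Real.exp p - 1) / (Real.exp p - 1) ^ 2 <
      (1 + Real.exp p * (1 + p)) / (Real.exp p * (1 + p) - 1) := by
  have hxpos : 0 < Real.exp p := Real.exp_pos p
  have hx1 : Real.exp p < 1 := Real.exp_lt_one_iff.mpr hp
  have hle : p + 1 ≤ Real.exp p := Real.add_one_le_exp p
  have hD2 : Real.exp p * (1 + p) - 1 < 0 := by
    nlinarith [mul_le_mul_of_nonneg_left hle hxpos.le]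
  refine ⟨hD2, ?_⟩
  have hD1 : 0 < (Real.exp p - 1) ^ 2 := by nlinarith [mul_pos (show (0:ℝ) < 1 - Real.exp p by linarith) (show (0:ℝ) < 1 - Real.exp p by linarith)]
  have hkey : Real.exp p * (p + 2) < 2 := by
    nlinarith [mul_le_mul_of_nonneg_left hle hxpos.le]
  have he2 : Real.exp (2 * p) = Real.exp p * Real.exp p := by
    rw [two_mul, Real.exp_add]
  rw [lt_div_iff_of_neg hD2, div_mul_eq_mul_div, lt_div_iff₀ hD1]
  have hprod : 0 < (-(2 * p) * Real.exp p) * (2 - Real.exp p * (p + 2)) :=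
    mul_pos (mul_pos (by linarith) hxpos) (by linarith)
  nlinarith [hprod, he2]
end

section
/- For every real number p > 0 one has eᵖ·(1 + p) − 1 > 0 and (1 + eᵖ·(1 + p))/(eᵖ·(1 + p) − 1) < (e^{2p} + 2p·eᵖ − 1)/(eᵖ − 1)². -/
theorem stmt_7 (p : ℝ) (hp : p > 0) :
    Real.exp p * (1 + p) - 1 > 0 ∧
    (1 + Real.exp p * (1 + p)) / (Real.exp p * (1 + p) - 1) <
      (Real.exp (2 * p) + 2 * p * Real.exp p - 1) / (Real.exp p - 1) ^ 2 := by
  have hE : 1 < Real.exp p := by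
    have := Real.add_one_le_exp p
    nlinarith [Real.exp_pos p, Real.add_one_le_exp (p/2), sq_nonneg (Real.exp (p/2))]
  have hd1 : Real.exp p * (1 + p) - 1 > 0 := by nlinarith
  refine ⟨hd1, ?_⟩
  have hd2 : (0:ℝ) < (Real.exp p - 1) ^ 2 := pow_pos (by linarith) 2
  rw [div_lt_div_iff₀ hd1 hd2, two_mul, Real.exp_add]
  nlinarith [mul_pos (mul_pos hp (Real.exp_pos p)) (show Real.exp p * (2 + p) - 2 > 0 by nlinarith)]
end

section
/- For every real number p < 0 one has (p²·e^{2p} − e^{2p} − 2p·eᵖ + 1)/(p²·e^{2p} − e^{2p} + 2eᵖ − 1) < (e^{2p} + 2p·eᵖ − 1)/(eᵖ − 1)². -/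
/-!
With x = eᵖ ∈ (0, 1), the numerators of h and g add up to p²x² and their denominators to
−p²x², so g − h = 2p²x²(1 − x(1 + p)) / ((x − 1)² · ((x − 1)² − p²x²)). Numerator and
denominator are both positive by the strict bound (1 − p)eᵖ < 1 for p ≠ 0.
-/

open Real

lemma Real.one_sub_mul_exp_lt_one {p : ℝ} (hp : p ≠ 0) : (1 - p) * exp p < 1 := by
  have h := mul_lt_mul_of_pos_right (add_one_lt_exp (neg_ne_zero.mpr hp)) (exp_pos p)
  rwa [neg_add_eq_sub, ← exp_add, neg_add_cancel, exp_zero] at h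

lemma ratio_lt_ratio_of_sq_lt {x p : ℝ} (hx : x ≠ 0) (hp : p ≠ 0) (hx1 : x ≠ 1)
    (hD : (p * x) ^ 2 < (1 - x) ^ 2) (hk : x * (1 + p) < 1) :
    (p ^ 2 * x ^ 2 - x ^ 2 - 2 * p * x + 1) / (p ^ 2 * x ^ 2 - x ^ 2 + 2 * x - 1) <
      (x ^ 2 + 2 * p * x - 1) / (x - 1) ^ 2 := by
  have hD₁ : p ^ 2 * x ^ 2 - x ^ 2 + 2 * x - 1 < 0 := by nlinarith
  have hD₂ : 0 < (x - 1) ^ 2 := by positivity [sub_ne_zero.mpr hx1]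
  rw [← sub_pos, div_sub_div _ _ hD₂.ne' hD₁.ne]
  have key : (x ^ 2 + 2 * p * x - 1) * (p ^ 2 * x ^ 2 - x ^ 2 + 2 * x - 1) -
      (x - 1) ^ 2 * (p ^ 2 * x ^ 2 - x ^ 2 - 2 * p * x + 1) =
      -(2 * (p * x) ^ 2 * (1 - x * (1 + p))) := by ring
  rw [key]
  exact div_pos_of_neg_of_neg (neg_neg_of_pos (by positivity [sub_pos.mpr hk]))
    (mul_neg_of_pos_of_neg hD₂ hD₁)

theorem stmt_9 (p : ℝ) (hp : p < 0) :
    (p ^ 2 * Real.exp (2 * p) - Real.exp (2 * p) - 2 * p * Real.exp p + 1) /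
      (p ^ 2 * Real.exp (2 * p) - Real.exp (2 * p) + 2 * Real.exp p - 1) <
    (Real.exp (2 * p) + 2 * p * Real.exp p - 1) / (Real.exp p - 1) ^ 2 := by
  have hx := exp_pos p
  have hx1 : exp p < 1 := exp_lt_one_iff.mpr hp
  have hbound := one_sub_mul_exp_lt_one hp.ne
  have hD : (p * exp p) ^ 2 < (1 - exp p) ^ 2 :=
    sq_lt_sq' (by nlinarith) (by nlinarith)
  rw [show exp (2 * p) = exp p ^ 2 by rw [← exp_nat_mul]; norm_num]
  exact ratio_lt_ratio_of_sq_lt hx.ne' hp.ne hx1.ne hD (by nlinarith)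
end

section
/- For every real number p with −1 < p < 0 one has (1 + p)·(eᵖ − 1)² − p²·eᵖ < 0 and ((1+p)·(e^{2p} + 2p·eᵖ − 1) − p²·eᵖ)/((1+p)·(e^{2p} − 2eᵖ + 1) − p²·eᵖ) > 1. -/
theorem stmt_11 (p : ℝ) (hp₁ : -1 < p) (hp₂ : p < 0) :
    (1 + p) * (Real.exp p - 1) ^ 2 - p ^ 2 * Real.exp p < 0 ∧
    ((1 + p) * (Real.exp (2 * p) + 2 * p * Real.exp p - 1) - p ^ 2 * Real.exp p) /
      ((1 + p) * (Real.exp (2 * p) - 2 * Real.exp p + 1) - p ^ 2 * Real.exp p) > 1 := by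
  have hu1 : 1 + p < Real.exp p := by
    have := Real.add_one_lt_exp (x := p) (by linarith : p ≠ 0)
    linarith
  have hu2 : Real.exp p < 1 := Real.exp_lt_one_iff.mpr hp₂
  have hp0 : 0 < 1 + p := by linarith
  have hD : (1 + p) * (Real.exp p - 1) ^ 2 - p ^ 2 * Real.exp p < 0 := by
    nlinarith [sq_nonneg p, sq_nonneg (Real.exp p - 1), mul_pos hp0 hp0,
      mul_pos (sub_pos.mpr hu1) (sub_pos.mpr hu2)]
  refine ⟨hD, ?_⟩
  have h2p : Real.exp (2 * p) = Real.exp p ^ 2 := by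
    rw [two_mul, Real.exp_add, sq]
  rw [h2p, gt_iff_lt]
  have hD' : (1 + p) * (Real.exp p ^ 2 - 2 * Real.exp p + 1) - p ^ 2 * Real.exp p < 0 := by
    nlinarith [hD]
  rw [lt_div_iff_of_neg hD']
  nlinarith [mul_pos hp0 (sub_pos.mpr hu2), Real.exp_pos p,
    mul_pos (Real.exp_pos p) hp0]
end

section
/- For every real number p > 0 one has (1 + p)·(eᵖ − 1)² − p²·eᵖ > 0 and (e^{2p} + 2p·eᵖ − 1)/(eᵖ − 1)² < ((1+p)·(e^{2p} + 2p·eᵖ − 1) − p²·eᵖ)/((1+p)·(e^{2p} − 2eᵖ + 1) − p²·eᵖ). -/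
theorem stmt_12 (p : ℝ) (hp : p > 0) :
    (1 + p) * (Real.exp p - 1) ^ 2 - p ^ 2 * Real.exp p > 0 ∧
    (Real.exp (2 * p) + 2 * p * Real.exp p - 1) / (Real.exp p - 1) ^ 2 <
      ((1 + p) * (Real.exp (2 * p) + 2 * p * Real.exp p - 1) - p ^ 2 * Real.exp p) /
        ((1 + p) * (Real.exp (2 * p) - 2 * Real.exp p + 1) - p ^ 2 * Real.exp p) := by
  have hE1 : 1 < Real.exp p := Real.one_lt_exp_iff.mpr hp
  have hEpos : 0 < Real.exp p := Real.exp_pos p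
  have hhalf : 0 < p / 2 := by linarith
  have hs : p / 2 < Real.sinh (p / 2) := Real.self_lt_sinh_iff.mpr hhalf
  rw [Real.sinh_eq] at hs
  have hhe : Real.exp (p/2) * Real.exp (-(p/2)) = 1 := by
    rw [← Real.exp_add]; simp
  have hhpos : 0 < Real.exp (p/2) := Real.exp_pos _
  have hsq : Real.exp (p/2) ^ 2 = Real.exp p := by
    rw [sq, ← Real.exp_add]; ring_nf
  -- e^p - 1 > p * e^{p/2}
  have key : Real.exp p - 1 > p * Real.exp (p/2) := by
    have := mul_lt_mul_of_pos_right hs hhpos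
    nlinarith [this, hhe, hsq]
  have key2 : (Real.exp p - 1) ^ 2 > p ^ 2 * Real.exp p := by
    nlinarith [key, hsq, mul_pos hp hhpos]
  have hD : 0 < (Real.exp p - 1) ^ 2 := by nlinarith
  have h1 : (1 + p) * (Real.exp p - 1) ^ 2 - p ^ 2 * Real.exp p > 0 := by
    nlinarith [key2, mul_pos hp hD]
  refine ⟨h1, ?_⟩
  have hE2 : Real.exp (2 * p) = Real.exp p ^ 2 := by
    rw [sq, ← Real.exp_add]; ring_nf
  have hden : 0 < (1 + p) * (Real.exp (2 * p) - 2 * Real.exp p + 1) - p ^ 2 * Real.exp p := by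
    have : Real.exp (2 * p) - 2 * Real.exp p + 1 = (Real.exp p - 1) ^ 2 := by
      rw [hE2]; ring
    rw [this]; exact h1
  rw [div_lt_div_iff₀ hD hden]
  -- reduces to A > D times stuff
  have hAD : Real.exp (2 * p) + 2 * p * Real.exp p - 1 >
      Real.exp (2 * p) - 2 * Real.exp p + 1 := by nlinarith
  nlinarith [mul_pos (mul_pos hp hp) hEpos, hAD, hD,
    mul_lt_mul_of_pos_left hAD (mul_pos (mul_pos hp hp) hEpos)]
end

section
/- Let a₃ > 0 and define f : ℝ → ℝ by f(y) = (1 + e^y)·(a₃·y + 1) + e^y − 1. Then f is strictly monotone increasing, there exists exactly one real number u with f(u) = 0, and this u satisfies u < 0. -/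
theorem stmt_14 (a₃ : ℝ) (ha₃ : a₃ > 0)
    (f : ℝ → ℝ)
    (hf : ∀ y, f y = (1 + Real.exp y) * (a₃ * y + 1) + Real.exp y - 1) :
    StrictMono f ∧ (∃! u : ℝ, f u = 0) ∧ (∀ u : ℝ, f u = 0 → u < 0) := by
  have hfe : f = fun y => (1 + Real.exp y) * (a₃ * y + 1) + Real.exp y - 1 := funext hf
  have hd : ∀ y, HasDerivAt f
      (Real.exp y * (a₃ * y + 1) + (1 + Real.exp y) * a₃ + Real.exp y) y := by
    intro y
    rw [hfe]
    have h1 : HasDerivAt (fun y => 1 + Real.exp y) (Real.exp y) y :=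
      (Real.hasDerivAt_exp y).const_add 1
    have h2 : HasDerivAt (fun y => a₃ * y + 1) a₃ y := by
      simpa using ((hasDerivAt_id y).const_mul a₃).add_const 1
    exact ((h1.mul h2).add (Real.hasDerivAt_exp y)).sub_const 1
  have key : ∀ y : ℝ, -1 < Real.exp y * (1 + y) := by
    intro y
    rcases le_or_gt 0 (1 + y) with h | h
    · nlinarith [mul_nonneg (Real.exp_pos y).le h]
    · have h1 : -(1 + y) < Real.exp (-y) := by
        have := Real.add_one_le_exp (-y); linarith
      have h2 := mul_lt_mul_of_pos_left h1 (Real.exp_pos y)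
      have h3 : Real.exp y * Real.exp (-y) = 1 := by
        rw [← Real.exp_add]; simp
      nlinarith
  have hpos : ∀ y : ℝ, 0 < Real.exp y * (a₃ * y + 1) + (1 + Real.exp y) * a₃ + Real.exp y := by
    intro y
    have := key y
    nlinarith [Real.exp_pos y, ha₃]
  have hmono : StrictMono f := by
    apply strictMono_of_deriv_pos
    intro y
    rw [(hd y).deriv]
    exact hpos y
  have hcont : Continuous f := by
    have : Differentiable ℝ f := fun y => (hd y).differentiableAt
    exact this.continuous
  have h0 : f 0 = 2 := by rw [hf]; norm_num
  have hneg : f (-2 / a₃) = -2 := by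
    rw [hf]
    have : a₃ * (-2 / a₃) + 1 = -1 := by field_simp; ring
    rw [this]; ring
  have hle : (-2 / a₃ : ℝ) ≤ 0 := by
    apply div_nonpos_of_nonpos_of_nonneg <;> linarith
  have hiv : (0 : ℝ) ∈ Set.Icc (f (-2 / a₃)) (f 0) := by
    rw [h0, hneg]; constructor <;> norm_num
  obtain ⟨u, hu, hfu⟩ := intermediate_value_Icc hle (hcont.continuousOn) hiv
  refine ⟨hmono, ⟨u, hfu, fun v hv => hmono.injective (by rw [hv, hfu])⟩, ?_⟩
  intro w hw
  have : f w < f 0 := by rw [hw, h0]; norm_num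
  exact hmono.lt_iff_lt.mp this
end

section
/- Let a₁, a₂, b₁, b₂ be real numbers and define h(x) = e^{2x} + (b₁a₂ − a₁b₂)·e^{−2x} + (a₁ − b₂)·(eˣ + e^{−x})·sin x + (a₂ + b₁ − 2)·eˣ·cos x + (2a₁b₂ − 2a₂b₁ + b₁ + a₂)·e^{−x}·cos x + 1 + (2b₂ − 2a₁)·sin x·cos x − (2b₁ + 2a₂)·(cos x)² + (b₁a₂ − b₂a₁). If either 1 + b₁ + a₂ + a₂b₁ − a₁b₂ < 0, or both 1 + b₁ + a₂ + a₂b₁ − a₁b₂ > 0 and b₁a₂ − a₁b₂ < 0, then there exists a real number p ≠ 0 with h(p) = 0. -/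
/-!
Writing `D = b₁a₂ - a₁b₂`, the function factors as
`h x = (eˣ + e⁻ˣ - 2 cos x) · G x` with `G x = eˣ + D e⁻ˣ + (a₁ - b₂) sin x + (a₂ + b₁) cos x`,
and `G 0 = 1 + b₁ + a₂ + a₂b₁ - a₁b₂`. Since the trigonometric part of `G` is bounded, `G → +∞`
as `x → +∞`, and `G → -∞` as `x → -∞` when `D < 0`. In either case of the hypothesis the
intermediate value theorem produces a zero of `G`, hence of `h`, on the side of `0` where `G`
changes sign.
-/

open Real Filter

namespace Real

noncomputable def expTrigSum (D α β x : ℝ) : ℝ := exp x + D * exp (-x) + (α * sin x + β * cos x)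

variable {D : ℝ} (α β : ℝ)

theorem abs_mul_sin_add_mul_cos_le (x : ℝ) : |α * sin x + β * cos x| ≤ |α| + |β| := by
  calc |α * sin x + β * cos x| ≤ |α| * |sin x| + |β| * |cos x| := by
        simpa only [abs_mul] using abs_add_le (α * sin x) (β * cos x)
    _ ≤ |α| * 1 + |β| * 1 := by
        gcongr
        exacts [abs_sin_le_one x, abs_cos_le_one x]
    _ = |α| + |β| := by ring

@[fun_prop]
theorem continuous_expTrigSum : Continuous (expTrigSum D α β) := by
  unfold expTrigSum
  fun_prop

theorem expTrigSum_zero : expTrigSum D α β 0 = 1 + D + β := by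
  simp [expTrigSum]

theorem tendsto_expTrigSum_atTop : Tendsto (expTrigSum D α β) atTop atTop := by
  have hexp : Tendsto (fun x ↦ exp x + D * exp (-x)) atTop atTop := by
    simpa using tendsto_exp_atTop.atTop_add (tendsto_exp_neg_atTop_nhds_zero.const_mul D)
  refine tendsto_atTop_add_right_of_le _ (-(|α| + |β|)) hexp fun x ↦ ?_
  exact (abs_le.mp (abs_mul_sin_add_mul_cos_le α β x)).1

theorem tendsto_expTrigSum_atBot (hD : D < 0) : Tendsto (expTrigSum D α β) atBot atBot := by
  have hexp : Tendsto (fun x ↦ exp x + D * exp (-x)) atBot atBot := by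
    have hneg : Tendsto (fun x ↦ D * exp (-x)) atBot atBot :=
      (tendsto_exp_atTop.comp tendsto_neg_atBot_atTop).const_mul_atTop_of_neg hD
    simpa using hneg.atBot_add tendsto_exp_atBot |>.congr fun x ↦ add_comm _ _
  refine tendsto_atBot_add_right_of_ge _ (|α| + |β|) hexp fun x ↦ ?_
  exact (abs_le.mp (abs_mul_sin_add_mul_cos_le α β x)).2

end Real

theorem exists_pos_eq_zero_of_tendsto_atTop {f : ℝ → ℝ} (hf : Continuous f) (h0 : f 0 < 0)
    (htop : Tendsto f atTop atTop) : ∃ p, 0 < p ∧ f p = 0 := by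
  obtain ⟨x, hfx, hx⟩ := ((htop.eventually_gt_atTop 0).and (eventually_gt_atTop 0)).exists
  obtain ⟨p, ⟨hp, -⟩, hfp⟩ := intermediate_value_Icc hx.le hf.continuousOn ⟨h0.le, hfx.le⟩
  exact ⟨p, hp.lt_of_ne (by rintro rfl; exact h0.ne hfp), hfp⟩

theorem exists_neg_eq_zero_of_tendsto_atBot {f : ℝ → ℝ} (hf : Continuous f) (h0 : 0 < f 0)
    (hbot : Tendsto f atBot atBot) : ∃ p, p < 0 ∧ f p = 0 := by
  obtain ⟨p, hp, hfp⟩ := exists_pos_eq_zero_of_tendsto_atTop (f := fun x ↦ -f (-x))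
    (by fun_prop) (by simpa using h0)
    (tendsto_neg_atBot_atTop.comp (hbot.comp tendsto_neg_atTop_atBot))
  exact ⟨-p, neg_neg_of_pos hp, neg_eq_zero.mp hfp⟩

theorem bolDet_eq_mul_expTrigSum (a₁ a₂ b₁ b₂ x : ℝ) :
    exp (2 * x) + (b₁ * a₂ - a₁ * b₂) * exp (-2 * x) +
      (a₁ - b₂) * (exp x + exp (-x)) * sin x +
      (a₂ + b₁ - 2) * exp x * cos x +
      (2 * a₁ * b₂ - 2 * a₂ * b₁ + b₁ + a₂) * exp (-x) * cos x +
      1 + (2 * b₂ - 2 * a₁) * sin x * cos x -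
      (2 * b₁ + 2 * a₂) * (cos x) ^ 2 + (b₁ * a₂ - b₂ * a₁) =
    (exp x + exp (-x) - 2 * cos x) * expTrigSum (b₁ * a₂ - a₁ * b₂) (a₁ - b₂) (a₂ + b₁) x := by
  have hexp_two : exp (2 * x) = exp x * exp x := by rw [← exp_add]; ring_nf
  have hexp_neg_two : exp (-2 * x) = exp (-x) * exp (-x) := by rw [← exp_add]; ring_nf
  have hexp_mul_neg : exp x * exp (-x) = 1 := by rw [← exp_add, add_neg_cancel, exp_zero]
  rw [hexp_two, hexp_neg_two, expTrigSum]
  linear_combination (a₁ * b₂ - b₁ * a₂ - 1) * hexp_mul_neg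

theorem stmt_17 (a₁ a₂ b₁ b₂ : ℝ)
    (h : ℝ → ℝ)
    (hh : ∀ x, h x = Real.exp (2 * x) + (b₁ * a₂ - a₁ * b₂) * Real.exp (-2 * x) +
      (a₁ - b₂) * (Real.exp x + Real.exp (-x)) * Real.sin x +
      (a₂ + b₁ - 2) * Real.exp x * Real.cos x +
      (2 * a₁ * b₂ - 2 * a₂ * b₁ + b₁ + a₂) * Real.exp (-x) * Real.cos x +
      1 + (2 * b₂ - 2 * a₁) * Real.sin x * Real.cos x -
      (2 * b₁ + 2 * a₂) * (Real.cos x) ^ 2 + (b₁ * a₂ - b₂ * a₁))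
    (hc : 1 + b₁ + a₂ + a₂ * b₁ - a₁ * b₂ < 0 ∨
      (1 + b₁ + a₂ + a₂ * b₁ - a₁ * b₂ > 0 ∧ b₁ * a₂ - a₁ * b₂ < 0)) :
    ∃ p : ℝ, p ≠ 0 ∧ h p = 0 := by
  have hfac (x : ℝ) := (hh x).trans (bolDet_eq_mul_expTrigSum a₁ a₂ b₁ b₂ x)
  set G := expTrigSum (b₁ * a₂ - a₁ * b₂) (a₁ - b₂) (a₂ + b₁)
  have hG0 : G 0 = 1 + b₁ + a₂ + a₂ * b₁ - a₁ * b₂ := by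
    simp only [G, expTrigSum_zero]; ring
  suffices ∃ p, p ≠ 0 ∧ G p = 0 by
    obtain ⟨p, hp, hGp⟩ := this
    exact ⟨p, hp, by rw [hfac, hGp, mul_zero]⟩
  rcases hc with hneg | ⟨hpos, hD⟩
  · obtain ⟨p, hp, hGp⟩ := exists_pos_eq_zero_of_tendsto_atTop (continuous_expTrigSum _ _)
      (hG0.trans_lt hneg) (tendsto_expTrigSum_atTop _ _)
    exact ⟨p, hp.ne', hGp⟩
  · obtain ⟨p, hp, hGp⟩ := exists_neg_eq_zero_of_tendsto_atBot (continuous_expTrigSum _ _)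
      (hpos.trans_eq hG0.symm) (tendsto_expTrigSum_atBot _ _ hD)
    exact ⟨p, hp.ne, hGp⟩
end

section
/- For every real number c with 3/7 < c ≤ 1 and every real number x, one has e^{4x} + (c − 1)·eˣ + c > 0. -/
theorem stmt_18 (c : ℝ) (hc₁ : 3 / 7 < c) (hc₂ : c ≤ 1) (x : ℝ) :
    Real.exp (4 * x) + (c - 1) * Real.exp x + c > 0 := by
  have h4 : Real.exp (4 * x) = Real.exp x ^ 4 := by
    rw [show (4 : ℝ) * x = x + x + x + x by ring, Real.exp_add, Real.exp_add, Real.exp_add]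
    ring
  rw [h4]
  set t := Real.exp x with ht
  have htpos : 0 < t := Real.exp_pos x
  have key : 7 * t ^ 4 - 4 * t + 3 ≥ 0 := by
    nlinarith [sq_nonneg (t - 1), sq_nonneg (t ^ 2 - 1), sq_nonneg (t ^ 2 - t), sq_nonneg (t ^ 2 + t - 1), sq_nonneg t]
  nlinarith [mul_pos htpos htpos, mul_lt_mul_of_pos_right hc₁ htpos]
end

section
/- For every real number c with 3/7 < c ≤ 1 and every real number x ≠ 0, one has e^{2x} + (2 − 2c)·e^{−x}·cos x + c·e^{−2x} + 1 + c − 4·(cos x)² > 0. -/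
/-!
Write `h(x) = k(x) + 4 sin² x` with
`k(x) = e^{2x} + (2 - 2c) e^{-x} cos x + c e^{-2x} + c - 3`. Then `k(0) = k'(0) = 0`, and
`k''(x) = 4 e^{2x} (1 + (1 - c) t³ sin x + c t⁴)` with `t = e^{-x}`, which is positive because
`1 - (1 - c) t³ + c t⁴ > 0` for `t ≥ 0` once `c ≥ 3/7`. So `k'` is strictly increasing and
vanishes at `0`, whence `k` has a strict global minimum `0` at `0`.
-/

open Real Set

theorem lt_of_strictMono_deriv_of_deriv_eq_zero {f f' : ℝ → ℝ} {a x : ℝ}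
    (hf : ∀ y, HasDerivAt f (f' y) y) (hf' : StrictMono f') (ha : f' a = 0) (hx : x ≠ a) :
    f a < f x := by
  have hcont : Continuous f := continuous_iff_continuousAt.2 fun y ↦ (hf y).continuousAt
  rcases hx.lt_or_gt with hxa | hax
  · refine strictAntiOn_of_hasDerivWithinAt_neg (convex_Iic a) hcont.continuousOn
      (fun y _ ↦ (hf y).hasDerivWithinAt) (fun y hy ↦ ?_) hxa.le self_mem_Iic hxa
    rw [interior_Iic] at hy
    exact ha ▸ hf' hy
  · refine strictMonoOn_of_hasDerivWithinAt_pos (convex_Ici a) hcont.continuousOn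
      (fun y _ ↦ (hf y).hasDerivWithinAt) (fun y hy ↦ ?_) self_mem_Ici hax.le hax
    rw [interior_Ici] at hy
    exact ha ▸ hf' hy

lemma one_sub_mul_pow_three_add_mul_pow_four_pos {c t : ℝ} (hc : 3 / 7 ≤ c) (ht : 0 ≤ t) :
    0 < 1 - (1 - c) * t ^ 3 + c * t ^ 4 := by
  -- the expression is increasing in `c`, and `3 t⁴ - 4 t³ + 7 = (t - 1)² (3 t² + 2 t + 1) + 6`
  nlinarith [mul_nonneg (sub_nonneg.2 hc) (by positivity : 0 ≤ t ^ 3 + t ^ 4),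
    mul_nonneg (sq_nonneg (t - 1)) (by positivity : 0 ≤ 3 * t ^ 2 + 2 * t + 1)]

namespace BolDeterminant

noncomputable def k (c x : ℝ) : ℝ :=
  exp (2 * x) + (2 - 2 * c) * exp (-x) * cos x + c * exp (-2 * x) + c - 3

lemma hasDerivAt_k (c x : ℝ) :
    HasDerivAt (k c)
      (2 * exp (2 * x) - (2 - 2 * c) * exp (-x) * (cos x + sin x) - 2 * c * exp (-2 * x)) x := by
  have e2 := ((hasDerivAt_id x).const_mul 2).exp
  have e1 := (hasDerivAt_id x).neg.exp
  have e3 := ((hasDerivAt_id x).const_mul (-2)).exp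
  exact ((((e2.add ((e1.const_mul (2 - 2 * c)).mul (hasDerivAt_cos x))).add
    (e3.const_mul c)).add_const c).sub_const 3).congr_deriv
      (by simp only [id_eq, Pi.neg_apply]; ring)

lemma hasDerivAt_deriv_k (c x : ℝ) :
    HasDerivAt
      (fun x ↦ 2 * exp (2 * x) - (2 - 2 * c) * exp (-x) * (cos x + sin x) - 2 * c * exp (-2 * x))
      (4 * exp (2 * x) + (4 - 4 * c) * exp (-x) * sin x + 4 * c * exp (-2 * x)) x := by
  have e2 := ((hasDerivAt_id x).const_mul 2).exp
  have e1 := (hasDerivAt_id x).neg.exp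
  have e3 := ((hasDerivAt_id x).const_mul (-2)).exp
  exact (((e2.const_mul 2).sub ((e1.const_mul (2 - 2 * c)).mul
    ((hasDerivAt_cos x).add (hasDerivAt_sin x)))).sub (e3.const_mul (2 * c))).congr_deriv
      (by simp only [id_eq, Pi.neg_apply, Pi.add_apply]; ring)

lemma deriv2_k_eq_mul (c x : ℝ) :
    4 * exp (2 * x) + (4 - 4 * c) * exp (-x) * sin x + 4 * c * exp (-2 * x) =
      4 * exp (2 * x) * (1 + (1 - c) * exp (-x) ^ 3 * sin x + c * exp (-x) ^ 4) := by
  have h3 : exp (2 * x) * exp (-x) ^ 3 = exp (-x) := by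
    rw [← exp_nat_mul, ← exp_add]; push_cast; ring_nf
  have h4 : exp (2 * x) * exp (-x) ^ 4 = exp (-2 * x) := by
    rw [← exp_nat_mul, ← exp_add]; push_cast; ring_nf
  linear_combination (4 - 4 * c) * sin x * h3.symm + 4 * c * h4.symm

lemma deriv2_k_pos {c : ℝ} (hc₁ : 3 / 7 ≤ c) (hc₂ : c ≤ 1) (x : ℝ) :
    0 < 4 * exp (2 * x) + (4 - 4 * c) * exp (-x) * sin x + 4 * c * exp (-2 * x) := by
  have ht := exp_pos (-x)
  have hsin : -((1 - c) * exp (-x) ^ 3) ≤ (1 - c) * exp (-x) ^ 3 * sin x := by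
    nlinarith [neg_one_le_sin x, mul_nonneg (sub_nonneg.2 hc₂) (pow_pos ht 3).le]
  rw [deriv2_k_eq_mul]
  exact mul_pos (by positivity)
    (by linarith [one_sub_mul_pow_three_add_mul_pow_four_pos hc₁ ht.le])

end BolDeterminant

open BolDeterminant in
theorem stmt_19 (c : ℝ) (hc₁ : 3 / 7 < c) (hc₂ : c ≤ 1) (x : ℝ) (hx : x ≠ 0) :
    Real.exp (2 * x) + (2 - 2 * c) * Real.exp (-x) * Real.cos x +
      c * Real.exp (-2 * x) + 1 + c - 4 * (Real.cos x) ^ 2 > 0 := by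
  have hk : k c 0 < k c x :=
    lt_of_strictMono_deriv_of_deriv_eq_zero (hasDerivAt_k c)
      (strictMono_of_hasDerivAt_pos (hasDerivAt_deriv_k c) (deriv2_k_pos hc₁.le hc₂))
      (by simp) hx
  have hk0 : k c 0 = 0 := by simp [k]; ring
  rw [hk0, k] at hk
  linarith [sin_sq_add_cos_sq x, sq_nonneg (sin x)]
end
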